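/- arXiv:2402.06376 — 5 statements merged into one kernel-verified Lean document; each statement's English description precedes it below -/
import Mathlib

section
/- Let H be a real Hilbert space and let f_1,…,f_k : H → ℝ each be locally Lipschitz near a point x ∈ H. If x is locally weakly Pareto optimal for (f_1,…,f_k), then 0 ∈ convexHull(⋃_{i=1}^k ∂f_i(x)). -/
open Filter Topology RealInnerProductSpace

/-- Clarke generalized directional derivative
`f°(x;v) = limsup_{y→x, t↓0} (f(y+tv) − f(y))/t`. -/
noncomputable def clarkeDir {H : Type*} [NormedAddCommGroup H] [InnerProductSpace ℝ H]
    (f : H → ℝ) (x v : H) : ℝ :=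
  limsup (fun p : H × ℝ => (f (p.1 + p.2 • v) - f p.1) / p.2)
    ((𝓝 x) ×ˢ (𝓝[>] (0 : ℝ)))

/-- Clarke subdifferential, with the dual of `H` identified with `H` via the Riesz map:
`∂f(x) = {w : ⟪w, v⟫ ≤ f°(x;v) for all v}`. -/
def clarkeSubdiff {H : Type*} [NormedAddCommGroup H] [InnerProductSpace ℝ H]
    (f : H → ℝ) (x : H) : Set H :=
  {w : H | ∀ v : H, ⟪w, v⟫ ≤ clarkeDir f x v}

/-- Goldstein ε-subdifferential
`∂_ε f(x) = closure (convexHull (⋃_{y ∈ closedBall x ε} ∂f(y)))`. -/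
def goldsteinSubdiff {H : Type*} [NormedAddCommGroup H] [InnerProductSpace ℝ H]
    (f : H → ℝ) (ε : ℝ) (x : H) : Set H :=
  closure (convexHull ℝ (⋃ y ∈ Metric.closedBall x ε, clarkeSubdiff f y))

/-- `f` is locally Lipschitz near `x`: Lipschitz on some open ball around `x`. -/
def LocallyLipschitzNear {H : Type*} [NormedAddCommGroup H]
    (f : H → ℝ) (x : H) : Prop :=
  ∃ ε > 0, ∃ L : NNReal, LipschitzOnWith L f (Metric.ball x ε)

/-- Multiobjective ε-subdifferential `F_ε(x) = closure (convexHull (⋃ i, ∂_ε f_i(x)))`. -/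
def multiSubdiff {H : Type*} [NormedAddCommGroup H] [InnerProductSpace ℝ H]
    {k : ℕ} (f : Fin k → H → ℝ) (ε : ℝ) (x : H) : Set H :=
  closure (convexHull ℝ (⋃ i : Fin k, goldsteinSubdiff (f i) ε x))

/-- The weak topology on `H`: the topology induced by the functionals `⟪·, v⟫`, `v : H`. -/
noncomputable def weakTopology (H : Type*) [NormedAddCommGroup H] [InnerProductSpace ℝ H] :
    TopologicalSpace H :=
  ⨅ v : H, TopologicalSpace.induced (fun x : H => ⟪x, v⟫) inferInstance

/-!
If some direction `v` had `f_i°(x; v) < 0` for every `i`, all the `f_i` would decrease along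
`x + t • v` for small `t > 0`; so Pareto optimality gives `max_i f_i°(x; ·) ≥ 0`. The Clarke
derivatives are sublinear and bounded by `L * ‖v‖`. Separating the open negative orthant of `ℝᵏ`
from the upper set of `v ↦ (f_i°(x; v))_i` gives weights `l` in the standard simplex with
`∑ l_i f_i°(x; ·) ≥ 0`. Hahn–Banach on `Hᵏ`, extending `0` from the diagonal under
`z ↦ ∑ l_i f_i°(x; z_i)`, and the Riesz map split this as `0 = ∑ w_i` with
`⟪w_i, ·⟫ ≤ l_i f_i°(x; ·)`, i.e. `w_i ∈ l_i • ∂f_i(x)`: a convex combination of subgradients.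
-/

theorem IsUpperSet.exists_stdSimplex_sum_mul_nonneg {ι : Type*} [Fintype ι] {A : Set (ι → ℝ)}
    (hA_upper : IsUpperSet A) (hA_conv : Convex ℝ A) (hA_zero : 0 ∈ A)
    (hA_smul : ∀ y ∈ A, ∀ t : ℝ, 0 < t → t • y ∈ A) (hA_pos : ∀ y ∈ A, ∃ i, 0 ≤ y i) :
    ∃ l ∈ stdSimplex ℝ ι, ∀ y ∈ A, 0 ≤ ∑ i, l i * y i := by
  classical
  set O : Set (ι → ℝ) := Set.univ.pi fun _ => Set.Iio 0
  have hO_open : IsOpen O := isOpen_set_pi Set.finite_univ fun _ _ => isOpen_Iio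
  have hO_conv : Convex ℝ O := convex_pi fun _ _ => convex_Iio 0
  have hdisj : Disjoint O A := by
    refine Set.disjoint_left.2 fun y hy hyA => ?_
    obtain ⟨i, hi⟩ := hA_pos y hyA
    exact hi.not_gt (hy i (Set.mem_univ i))
  obtain ⟨g, u, hgO, hgA⟩ := geometric_hahn_banach_open hO_conv hO_open hA_conv hdisj
  have hg : ∀ y, g y = ∑ i, g (Pi.single i 1) * y i := fun y => by
    refine (LinearMap.pi_apply_eq_sum_univ (g : (ι → ℝ) →ₗ[ℝ] ℝ) y).trans
      (Finset.sum_congr rfl fun i _ => ?_)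
    simp only [smul_eq_mul, ContinuousLinearMap.coe_coe, mul_comm (y i)]
    congr 2
    ext j
    simp [Pi.single_apply, eq_comm]
  have hu : u ≤ 0 := by simpa using hgA 0 hA_zero
  -- As `A` is a cone, the bound `u ≤ g` on `A` improves to `0 ≤ g`.
  have hgA_nonneg : ∀ y ∈ A, 0 ≤ g y := by
    intro y hy
    by_contra! hgy
    have := hgA _ (hA_smul y hy ((1 - u) / -g y) (by apply div_pos <;> linarith))
    rw [map_smul, smul_eq_mul, div_mul_eq_mul_div, div_neg, mul_div_cancel_right₀ _ hgy.ne] at this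
    linarith
  have hcoef : ∀ i, 0 ≤ g (Pi.single i 1) := fun i =>
    hgA_nonneg _ (hA_upper (Pi.single_nonneg.2 zero_le_one) hA_zero)
  have hcoef_sum : 0 < ∑ i, g (Pi.single i 1) := by
    have := hgO (fun _ => -1) fun i _ => by norm_num
    rw [hg] at this
    simp only [mul_neg, mul_one, Finset.sum_neg_distrib] at this
    linarith
  refine ⟨fun i => g (Pi.single i 1) / ∑ j, g (Pi.single j 1),
    ⟨fun i => div_nonneg (hcoef i) hcoef_sum.le, by rw [← Finset.sum_div, div_self hcoef_sum.ne']⟩,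
    fun y hy => ?_⟩
  simp_rw [div_mul_eq_mul_div, ← Finset.sum_div, ← hg]
  exact div_nonneg (hgA_nonneg y hy) hcoef_sum.le

structure IsSublinear {E : Type*} [AddCommGroup E] [Module ℝ E] (p : E → ℝ) : Prop where
  add_le : ∀ v w, p (v + w) ≤ p v + p w
  smul_of_pos : ∀ c : ℝ, 0 < c → ∀ v, p (c • v) = c * p v

namespace IsSublinear

variable {E : Type*} [AddCommGroup E] [Module ℝ E] {p : E → ℝ}

theorem map_zero (hp : IsSublinear p) : p 0 = 0 := by
  have h := hp.smul_of_pos 2 two_pos 0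
  rw [smul_zero] at h
  linarith

theorem smul_of_nonneg (hp : IsSublinear p) {c : ℝ} (hc : 0 ≤ c) (v : E) :
    p (c • v) = c * p v := by
  rcases hc.eq_or_lt with rfl | hc
  · rw [zero_smul, zero_mul, hp.map_zero]
  · exact hp.smul_of_pos c hc v

theorem const_mul (hp : IsSublinear p) {l : ℝ} (hl : 0 ≤ l) : IsSublinear fun v => l * p v where
  add_le v w := (mul_le_mul_of_nonneg_left (hp.add_le v w) hl).trans_eq (mul_add _ _ _)
  smul_of_pos c hc v := by rw [hp.smul_of_pos c hc]; ring

theorem sum_comp_eval {ι : Type*} [Fintype ι] {q : ι → E → ℝ} (hq : ∀ i, IsSublinear (q i)) :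
    IsSublinear fun z : ι → E => ∑ i, q i (z i) where
  add_le z y := by
    rw [← Finset.sum_add_distrib]
    exact Finset.sum_le_sum fun i _ => (hq i).add_le (z i) (y i)
  smul_of_pos c hc z := by
    simp only [Pi.smul_apply, (hq _).smul_of_pos c hc, Finset.mul_sum]

theorem exists_stdSimplex_sum_nonneg {ι : Type*} [Fintype ι] {p : ι → E → ℝ}
    (hp : ∀ i, IsSublinear (p i)) (hmax : ∀ v, ∃ i, 0 ≤ p i v) :
    ∃ l ∈ stdSimplex ℝ ι, ∀ v, 0 ≤ ∑ i, l i * p i v := by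
  set A : Set (ι → ℝ) := {y | ∃ v, ∀ i, p i v ≤ y i}
  have hA_conv : Convex ℝ A := by
    rintro y ⟨v, hv⟩ z ⟨w, hw⟩ a b ha hb -
    refine ⟨a • v + b • w, fun i => ?_⟩
    calc p i (a • v + b • w) ≤ a * p i v + b * p i w := by
          rw [← (hp i).smul_of_nonneg ha, ← (hp i).smul_of_nonneg hb]
          exact (hp i).add_le _ _
      _ ≤ a * y i + b * z i := by gcongr <;> simp_all
  obtain ⟨l, hl, hlA⟩ := IsUpperSet.exists_stdSimplex_sum_mul_nonneg (A := A)
    (fun y z hyz ⟨v, hv⟩ => ⟨v, fun i => (hv i).trans (hyz i)⟩) hA_conv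
    ⟨0, fun i => (hp i).map_zero.le⟩
    (fun y ⟨v, hv⟩ t ht => ⟨t • v, fun i => by
      rw [(hp i).smul_of_pos t ht]
      exact mul_le_mul_of_nonneg_left (hv i) ht.le⟩)
    fun y ⟨v, hv⟩ => (hmax v).imp fun i hi => hi.trans (hv i)
  exact ⟨l, hl, fun v => hlA _ ⟨v, fun i => le_rfl⟩⟩

theorem exists_linearMap_le_sum_eq_zero {ι : Type*} [Fintype ι]
    {q : ι → E → ℝ} (hq : ∀ i, IsSublinear (q i)) (hsum : ∀ v, 0 ≤ ∑ i, q i v) :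
    ∃ g : ι → E →ₗ[ℝ] ℝ, (∀ v, ∑ i, g i v = 0) ∧ ∀ i v, g i v ≤ q i v := by
  classical
  -- Extend `0` from the diagonal of `ι → E`, dominated by `z ↦ ∑ q_i (z_i)`.
  set diag : Submodule ℝ (ι → E) := LinearMap.range (LinearMap.pi fun _ => LinearMap.id)
  obtain ⟨G, hG_diag, hG_le⟩ := exists_extension_of_le_sublinear ((0 : (ι → E) →ₗ[ℝ] ℝ).toPMap diag)
    (fun z => ∑ i, q i (z i)) (sum_comp_eval hq).smul_of_pos (sum_comp_eval hq).add_le (by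
      rintro ⟨_, v, rfl⟩
      exact hsum v)
  refine ⟨fun i => G ∘ₗ LinearMap.single ℝ (fun _ => E) i, fun v => ?_, fun i v => ?_⟩
  · simp only [LinearMap.coe_comp, Function.comp_apply, LinearMap.coe_single, ← map_sum,
      Finset.univ_sum_single]
    exact hG_diag ⟨fun _ => v, v, rfl⟩
  · have := hG_le (Pi.single i v)
    rwa [Finset.sum_eq_single i (fun j _ hj => by rw [Pi.single_eq_of_ne hj, (hq j).map_zero])
      (by simp), Pi.single_eq_same] at this

end IsSublinear

theorem zero_mem_convexHull_iUnion_of_sum_eq_zero {E : Type*} [AddCommGroup E] [Module ℝ E]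
    {ι : Type*} [Fintype ι] {S : ι → Set E} {l : ι → ℝ} (hl : l ∈ stdSimplex ℝ ι) {w : ι → E}
    (hw_sum : ∑ i, w i = 0) (hw_zero : ∀ i, l i = 0 → w i = 0)
    (hw_mem : ∀ i, 0 < l i → (l i)⁻¹ • w i ∈ S i) :
    (0 : E) ∈ convexHull ℝ (⋃ i, S i) := by
  classical
  set s := Finset.univ.filter fun i => l i ≠ 0
  have hs : ∑ i ∈ s, l i = 1 := by rw [Finset.sum_filter_ne_zero]; exact hl.2
  have hcm := s.centerMass_mem_convexHull (z := fun i => (l i)⁻¹ • w i) (fun i _ => hl.1 i)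
    (by rw [hs]; exact one_pos) fun i hi =>
      Set.mem_iUnion.2 ⟨i, hw_mem i ((hl.1 i).lt_of_ne' (Finset.mem_filter.1 hi).2)⟩
  convert hcm using 1
  rw [Finset.centerMass, hs, inv_one, one_smul]
  calc (0 : E) = ∑ i, w i := hw_sum.symm
    _ = ∑ i ∈ s, w i := (Finset.sum_filter_of_ne fun i _ hwi => mt (hw_zero i) hwi).symm
    _ = ∑ i ∈ s, l i • (l i)⁻¹ • w i :=
      Finset.sum_congr rfl fun i hi => (smul_inv_smul₀ (Finset.mem_filter.1 hi).2 _).symm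

section Hilbert

variable {H : Type*} [NormedAddCommGroup H] [InnerProductSpace ℝ H] [CompleteSpace H]

theorem exists_inner_eq_of_le_mul_norm (g : H →ₗ[ℝ] ℝ) {C : ℝ} (hg : ∀ v, g v ≤ C * ‖v‖) :
    ∃ w : H, ∀ v, ⟪w, v⟫ = g v := by
  have hbound : ∀ v, ‖g v‖ ≤ C * ‖v‖ := fun v => by
    have := hg (-v)
    rw [map_neg, norm_neg] at this
    rw [Real.norm_eq_abs, abs_le]
    constructor <;> linarith [hg v]
  exact ⟨(InnerProductSpace.toDual ℝ H).symm (g.mkContinuous C hbound),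
    fun v => InnerProductSpace.toDual_symm_apply⟩

theorem IsSublinear.exists_inner_le_sum_eq_zero {ι : Type*} [Fintype ι] {q : ι → H → ℝ}
    (hq : ∀ i, IsSublinear (q i)) (hbdd : ∀ i, ∃ C, ∀ v, q i v ≤ C * ‖v‖)
    (hsum : ∀ v, 0 ≤ ∑ i, q i v) :
    ∃ w : ι → H, ∑ i, w i = 0 ∧ ∀ i v, ⟪w i, v⟫ ≤ q i v := by
  obtain ⟨g, hg_sum, hg_le⟩ := IsSublinear.exists_linearMap_le_sum_eq_zero hq hsum
  have hriesz : ∀ i, ∃ w : H, ∀ v, ⟪w, v⟫ = g i v := fun i =>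
    let ⟨C, hC⟩ := hbdd i
    exists_inner_eq_of_le_mul_norm (g i) fun v => (hg_le i v).trans (hC v)
  choose w hw using hriesz
  refine ⟨w, ext_inner_right ℝ fun v => ?_, fun i v => (hw i v).trans_le (hg_le i v)⟩
  rw [sum_inner, inner_zero_left]
  simp only [hw, hg_sum]

end Hilbert

noncomputable def diffQuot {E : Type*} [AddCommGroup E] [Module ℝ E] (f : E → ℝ) (v : E)
    (p : E × ℝ) : ℝ :=
  (f (p.1 + p.2 • v) - f p.1) / p.2

theorem tendsto_mul_snd_prod {X : Type*} [TopologicalSpace X] (x : X) {c : ℝ} (hc : 0 < c) :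
    Tendsto (fun p : X × ℝ => (p.1, c * p.2)) (𝓝 x ×ˢ 𝓝[>] 0) (𝓝 x ×ˢ 𝓝[>] 0) :=
  tendsto_fst.prodMk <| (show Tendsto (c * ·) (𝓝[>] (0 : ℝ)) (𝓝[>] 0) from
    fun _ hs => eventually_nhdsGT_zero_mul_left hc hs).comp tendsto_snd

section DiffQuot

variable {E : Type*} [NormedAddCommGroup E] [NormedSpace ℝ E] {f : E → ℝ} {x : E}

theorem tendsto_add_smul_nhds (x v : E) :
    Tendsto (fun p : E × ℝ => p.1 + p.2 • v) (𝓝 x ×ˢ 𝓝[>] 0) (𝓝 x) := by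
  have h : Tendsto (fun p : E × ℝ => p.2 • v) (𝓝 x ×ˢ 𝓝[>] 0) (𝓝 0) := by
    simpa using (tendsto_snd.mono_right (nhdsWithin_le_nhds (a := (0 : ℝ)))).smul_const v
  simpa using tendsto_fst.add h

theorem tendsto_add_smul_prod (x v : E) :
    Tendsto (fun p : E × ℝ => (p.1 + p.2 • v, p.2)) (𝓝 x ×ˢ 𝓝[>] 0) (𝓝 x ×ˢ 𝓝[>] 0) :=
  (tendsto_add_smul_nhds x v).prodMk tendsto_snd

theorem LocallyLipschitzNear.exists_eventually_abs_diffQuot_le (hf : LocallyLipschitzNear f x) :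
    ∃ L : ℝ, ∀ v, ∀ᶠ p in 𝓝 x ×ˢ 𝓝[>] 0, |diffQuot f v p| ≤ L * ‖v‖ := by
  obtain ⟨ε, hε, L, hL⟩ := hf
  refine ⟨L, fun v => ?_⟩
  have hball := Metric.ball_mem_nhds x hε
  filter_upwards [tendsto_fst.eventually hball, (tendsto_add_smul_nhds x v).eventually hball,
    tendsto_snd.eventually self_mem_nhdsWithin] with p hy hyv (ht : 0 < p.2)
  rw [diffQuot, abs_div, abs_of_pos ht, div_le_iff₀ ht, ← Real.dist_eq]
  calc dist (f (p.1 + p.2 • v)) (f p.1) ≤ L * dist (p.1 + p.2 • v) p.1 := hL.dist_le_mul _ hyv _ hy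
    _ = L * ‖v‖ * p.2 := by
      rw [dist_self_add_left, norm_smul, Real.norm_of_nonneg ht.le]
      ring

end DiffQuot

section ClarkeDir

variable {H : Type*} [NormedAddCommGroup H] [InnerProductSpace ℝ H] {f : H → ℝ} {x : H}

theorem clarkeDir_eq_limsup (f : H → ℝ) (x v : H) :
    clarkeDir f x v = limsup (diffQuot f v) (𝓝 x ×ˢ 𝓝[>] 0) := rfl

namespace LocallyLipschitzNear

theorem isBoundedUnder_diffQuot_comp (hf : LocallyLipschitzNear f x) (v : H)
    {ψ : H × ℝ → H × ℝ} (hψ : Tendsto ψ (𝓝 x ×ˢ 𝓝[>] 0) (𝓝 x ×ˢ 𝓝[>] 0)) :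
    IsBoundedUnder (· ≤ ·) (𝓝 x ×ˢ 𝓝[>] 0) (diffQuot f v ∘ ψ) ∧
      IsBoundedUnder (· ≥ ·) (𝓝 x ×ˢ 𝓝[>] 0) (diffQuot f v ∘ ψ) := by
  obtain ⟨L, hL⟩ := hf.exists_eventually_abs_diffQuot_le
  exact isBoundedUnder_le_abs.1 (isBoundedUnder_of_eventually_le (hψ.eventually (hL v)))

theorem limsup_diffQuot_comp_le (hf : LocallyLipschitzNear f x) (v : H)
    {ψ : H × ℝ → H × ℝ} (hψ : Tendsto ψ (𝓝 x ×ˢ 𝓝[>] 0) (𝓝 x ×ˢ 𝓝[>] 0)) :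
    limsup (diffQuot f v ∘ ψ) (𝓝 x ×ˢ 𝓝[>] 0) ≤ clarkeDir f x v := by
  rw [limsup_comp]
  exact limsup_le_limsup_of_le hψ (hf.isBoundedUnder_diffQuot_comp v hψ).2.isCoboundedUnder_le
    (hf.isBoundedUnder_diffQuot_comp v tendsto_id).1

theorem clarkeDir_add_le (hf : LocallyLipschitzNear f x) (v w : H) :
    clarkeDir f x (v + w) ≤ clarkeDir f x v + clarkeDir f x w := by
  set φ : H × ℝ → H × ℝ := fun p => (p.1 + p.2 • w, p.2)
  have hsplit : diffQuot f (v + w) = diffQuot f v ∘ φ + diffQuot f w := by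
    ext p
    simp only [diffQuot, φ, Function.comp_apply, Pi.add_apply, smul_add, ← add_div]
    rw [add_right_comm, ← add_assoc, sub_add_sub_cancel]
  obtain ⟨hφ_le, hφ_ge⟩ := hf.isBoundedUnder_diffQuot_comp v (tendsto_add_smul_prod x w)
  obtain ⟨hw_le, hw_ge⟩ := hf.isBoundedUnder_diffQuot_comp w tendsto_id
  calc clarkeDir f x (v + w)
      ≤ limsup (diffQuot f v ∘ φ) (𝓝 x ×ˢ 𝓝[>] 0) + clarkeDir f x w := by
        rw [clarkeDir_eq_limsup, hsplit]
        exact limsup_add_le hφ_ge hφ_le hw_ge.isCoboundedUnder_le hw_le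
    _ ≤ clarkeDir f x v + clarkeDir f x w :=
        add_le_add_left (hf.limsup_diffQuot_comp_le v (tendsto_add_smul_prod x w)) _

theorem clarkeDir_smul_le (hf : LocallyLipschitzNear f x) {c : ℝ} (hc : 0 < c) (v : H) :
    clarkeDir f x (c • v) ≤ c * clarkeDir f x v := by
  set ψ : H × ℝ → H × ℝ := fun p => (p.1, c * p.2)
  have hscale : diffQuot f (c • v) = (c * ·) ∘ (diffQuot f v ∘ ψ) := by
    ext p
    simp only [diffQuot, ψ, Function.comp_apply, smul_smul, mul_comm p.2 c]
    rw [mul_div_assoc', mul_div_mul_left _ _ hc.ne']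
  obtain ⟨hψ_le, hψ_ge⟩ := hf.isBoundedUnder_diffQuot_comp v (tendsto_mul_snd_prod x hc)
  rw [clarkeDir_eq_limsup, hscale, ← (monotone_mul_left_of_nonneg hc.le).map_limsup_of_continuousAt
    _ (continuous_const_mul c).continuousAt hψ_le hψ_ge.isCoboundedUnder_le]
  exact mul_le_mul_of_nonneg_left (hf.limsup_diffQuot_comp_le v (tendsto_mul_snd_prod x hc)) hc.le

theorem isSublinear_clarkeDir (hf : LocallyLipschitzNear f x) : IsSublinear (clarkeDir f x) where
  add_le := hf.clarkeDir_add_le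
  smul_of_pos c hc v := by
    refine (hf.clarkeDir_smul_le hc v).antisymm ?_
    have h := hf.clarkeDir_smul_le (inv_pos.2 hc) (c • v)
    rwa [inv_smul_smul₀ hc.ne', le_inv_mul_iff₀ hc] at h

theorem exists_clarkeDir_le (hf : LocallyLipschitzNear f x) :
    ∃ L : ℝ, ∀ v, clarkeDir f x v ≤ L * ‖v‖ := by
  obtain ⟨L, hL⟩ := hf.exists_eventually_abs_diffQuot_le
  exact ⟨L, fun v => limsup_le_of_le
    (hf.isBoundedUnder_diffQuot_comp v tendsto_id).2.isCoboundedUnder_le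
    ((hL v).mono fun _ h => (abs_le.1 h).2)⟩

theorem eventually_lt_of_clarkeDir_neg (hf : LocallyLipschitzNear f x) {v : H}
    (hv : clarkeDir f x v < 0) : ∀ᶠ t in 𝓝[>] (0 : ℝ), f (x + t • v) < f x := by
  have hxt : Tendsto (fun t : ℝ => (x, t)) (𝓝[>] 0) (𝓝 x ×ˢ 𝓝[>] 0) :=
    tendsto_const_nhds.prodMk tendsto_id
  filter_upwards [hxt.eventually (eventually_lt_of_limsup_lt hv
    (hf.isBoundedUnder_diffQuot_comp v tendsto_id).1), self_mem_nhdsWithin] with t ht (ht0 : 0 < t)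
  have ht' : (f (x + t • v) - f x) / t < 0 := ht
  rwa [div_lt_iff₀ ht0, zero_mul, sub_neg] at ht'

end LocallyLipschitzNear

theorem exists_clarkeDir_nonneg_of_pareto {ι : Type*} [Finite ι] {f : ι → H → ℝ}
    (hlip : ∀ i, LocallyLipschitzNear (f i) x) {δ : ℝ} (hδ : 0 < δ)
    (hpar : ¬ ∃ x' : H, ‖x' - x‖ < δ ∧ ∀ i, f i x' < f i x) (v : H) :
    ∃ i, 0 ≤ clarkeDir (f i) x v := by
  by_contra! hneg
  have hdesc : ∀ᶠ t in 𝓝[>] (0 : ℝ), ∀ i, f i (x + t • v) < f i x :=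
    eventually_all.2 fun i => (hlip i).eventually_lt_of_clarkeDir_neg (hneg i)
  have hnear : ∀ᶠ t in 𝓝[>] (0 : ℝ), ‖x + t • v - x‖ < δ := by
    have hxt : Tendsto (fun t : ℝ => (x, t)) (𝓝[>] 0) (𝓝 x ×ˢ 𝓝[>] 0) :=
      tendsto_const_nhds.prodMk tendsto_id
    filter_upwards [((tendsto_add_smul_nhds x v).comp hxt).eventually (Metric.ball_mem_nhds x hδ)]
      with t ht
    rwa [dist_eq_norm] at ht
  obtain ⟨t, hdesc_t, hnear_t⟩ := (hdesc.and hnear).exists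
  exact hpar ⟨x + t • v, hnear_t, hdesc_t⟩

theorem inv_smul_mem_clarkeSubdiff {w : H} {l : ℝ} (hl : 0 < l)
    (hw : ∀ v, ⟪w, v⟫ ≤ l * clarkeDir f x v) : l⁻¹ • w ∈ clarkeSubdiff f x := fun v => by
  rw [real_inner_smul_left, inv_mul_le_iff₀ hl]
  exact hw v

end ClarkeDir

/-- If `x` is locally weakly Pareto optimal for locally Lipschitz `f_1,…,f_k`, then
`0 ∈ convexHull (⋃ i, ∂f_i(x))`. -/
theorem stmt0 {H : Type*} [NormedAddCommGroup H] [InnerProductSpace ℝ H] [CompleteSpace H]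
    {k : ℕ} (f : Fin k → H → ℝ) (x : H)
    (hlip : ∀ i, LocallyLipschitzNear (f i) x)
    (hpareto : ∃ δ > 0, ¬ ∃ x' : H, ‖x' - x‖ < δ ∧ ∀ i, f i x' < f i x) :
    (0 : H) ∈ convexHull ℝ (⋃ i : Fin k, clarkeSubdiff (f i) x) := by
  obtain ⟨δ, hδ, hpar⟩ := hpareto
  have hsub : ∀ i, IsSublinear (clarkeDir (f i) x) := fun i => (hlip i).isSublinear_clarkeDir
  obtain ⟨l, hl, hl_sum⟩ := IsSublinear.exists_stdSimplex_sum_nonneg hsub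
    (exists_clarkeDir_nonneg_of_pareto hlip hδ hpar)
  obtain ⟨w, hw_sum, hw⟩ := IsSublinear.exists_inner_le_sum_eq_zero
    (q := fun i v => l i * clarkeDir (f i) x v) (fun i => (hsub i).const_mul (hl.1 i))
    (fun i => by
      obtain ⟨C, hC⟩ := (hlip i).exists_clarkeDir_le
      exact ⟨l i * C, fun v => by
        rw [mul_assoc]
        exact mul_le_mul_of_nonneg_left (hC v) (hl.1 i)⟩)
    hl_sum
  refine zero_mem_convexHull_iUnion_of_sum_eq_zero hl hw_sum (fun i hi => ?_)
    fun i hi => inv_smul_mem_clarkeSubdiff hi (hw i)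
  exact real_inner_self_nonpos.1 (by simpa [hi] using hw i (w i))
end

section
/- Let H be a real Hilbert space and f : H → ℝ locally Lipschitz near x ∈ H. Then the Clarke subdifferential equals the intersection of all Goldstein ε-subdifferentials: ∂f(x) = ⋂_{ε > 0} ∂_ε f(x). -/
open Filter Topology RealInnerProductSpace

/-!
The inclusion `∂f(x) ⊆ ∂_ε f(x)` is immediate. Conversely, a Lipschitz bound makes the difference
quotients in the definition of `f°` bounded, which makes `y ↦ f°(y; v)` upper semicontinuous at `x`:
for every `c > f°(x; v)` there is an `ε > 0` with `f°(y; v) ≤ c` on the closed `ε`-ball. Then every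
`∂f(y)` with `y` in that ball lies in the closed half-space `{u | ⟪u, v⟫ ≤ c}`, hence so does
`∂_ε f(x)`, and an element of all `∂_ε f(x)` satisfies `⟪w, v⟫ ≤ f°(x; v)`.
-/

theorem LipschitzOnWith.eventually_abs_diffQuot_le {E : Type*} [NormedAddCommGroup E]
    [NormedSpace ℝ E] {f : E → ℝ} {L : NNReal} {s : Set E} (hf : LipschitzOnWith L f s) {y : E}
    (hs : s ∈ 𝓝 y) (v : E) :
    ∀ᶠ p : E × ℝ in 𝓝 y ×ˢ 𝓝[>] (0 : ℝ), |(f (p.1 + p.2 • v) - f p.1) / p.2| ≤ L * ‖v‖ := by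
  have hshift : ∀ᶠ p : E × ℝ in 𝓝 y ×ˢ 𝓝 (0 : ℝ), p.1 + p.2 • v ∈ s := by
    rw [← nhds_prod_eq]
    exact (Continuous.tendsto' (f := fun p : E × ℝ => p.1 + p.2 • v) (by fun_prop) (y, 0) y
      (by simp)) hs
  filter_upwards [prod_mem_prod hs self_mem_nhdsWithin,
    hshift.filter_mono (prod_mono le_rfl nhdsWithin_le_nhds)] with p ⟨hp₁, ht⟩ hp₂
  have ht : 0 < p.2 := ht
  have hlip := hf.dist_le_mul _ hp₂ _ hp₁
  rw [Real.dist_eq, dist_eq_norm, add_sub_cancel_left, norm_smul, Real.norm_of_nonneg ht.le]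
    at hlip
  rw [abs_div, abs_of_pos ht, div_le_iff₀ ht]
  linarith

section Clarke

variable {H : Type*} [NormedAddCommGroup H] [InnerProductSpace ℝ H] {f : H → ℝ} {x : H}

theorem LocallyLipschitzNear.upperSemicontinuousAt_clarkeDir (hf : LocallyLipschitzNear f x)
    (v : H) : UpperSemicontinuousAt (fun y => clarkeDir f y v) x := by
  obtain ⟨r, hr, L, hL⟩ := hf
  have hball : ∀ᶠ y in 𝓝 x, Metric.ball x r ∈ 𝓝 y :=
    eventually_mem_nhds_iff.2 (Metric.ball_mem_nhds x hr)
  intro c hc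
  obtain ⟨c', hc', hc'c⟩ := exists_between hc
  have hlt : ∀ᶠ p : H × ℝ in 𝓝 x ×ˢ 𝓝[>] (0 : ℝ), (f (p.1 + p.2 • v) - f p.1) / p.2 < c' :=
    eventually_lt_of_limsup_lt hc' ⟨_, eventually_map.2 <|
      (hL.eventually_abs_diffQuot_le (hball.self_of_nhds) v).mono fun _ hp => (abs_le.1 hp).2⟩
  obtain ⟨U, hU, T, hT, hUT⟩ := mem_prod_iff.1 hlt
  filter_upwards [eventually_eventually_nhds.2 hU, hball] with y hUy hy
  refine (limsup_le_of_le ?_ <| eventually_of_mem (prod_mem_prod hUy hT)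
    fun p hp => (hUT hp).le).trans_lt hc'c
  exact isCoboundedUnder_le_of_eventually_le _
    ((hL.eventually_abs_diffQuot_le hy v).mono fun _ hp => (abs_le.1 hp).1)

theorem clarkeSubdiff_subset_goldsteinSubdiff {ε : ℝ} (hε : 0 ≤ ε) :
    clarkeSubdiff f x ⊆ goldsteinSubdiff f ε x := fun _ hw =>
  subset_closure <| subset_convexHull ℝ _ <| Set.mem_biUnion (Metric.mem_closedBall_self hε) hw

theorem goldsteinSubdiff_subset_halfSpace {ε c : ℝ} {v : H}
    (hc : ∀ y ∈ Metric.closedBall x ε, clarkeDir f y v ≤ c) :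
    goldsteinSubdiff f ε x ⊆ {u | ⟪u, v⟫ ≤ c} := by
  refine closure_minimal (convexHull_min ?_ ?_) ?_
  · simp only [Set.iUnion_subset_iff]
    exact fun y hy w hw => (hw v).trans (hc y hy)
  · exact convex_halfSpace_le
      ⟨fun a b => inner_add_left a b v, fun r a => real_inner_smul_left a v r⟩ c
  · exact isClosed_le (by fun_prop) continuous_const

end Clarke

theorem stmt4_general {H : Type*} [NormedAddCommGroup H] [InnerProductSpace ℝ H]
    (f : H → ℝ) (x : H) (hlip : LocallyLipschitzNear f x) :
    clarkeSubdiff f x = ⋂ (ε : ℝ) (_ : 0 < ε), goldsteinSubdiff f ε x := by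
  refine subset_antisymm (fun w hw => Set.mem_iInter₂.2 fun ε hε =>
    clarkeSubdiff_subset_goldsteinSubdiff hε.le hw) fun w hw v => ?_
  refine le_of_forall_gt_imp_ge_of_dense fun c hc => ?_
  obtain ⟨ε, hε, hball⟩ := Metric.nhds_basis_closedBall.eventually_iff.1
    (hlip.upperSemicontinuousAt_clarkeDir v c hc)
  exact goldsteinSubdiff_subset_halfSpace (fun y hy => (hball hy).le) (Set.mem_iInter₂.1 hw ε hε)

/-- `∂f(x) = ⋂_{ε > 0} ∂_ε f(x)` for `f` locally Lipschitz near `x`. -/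
theorem stmt4 {H : Type*} [NormedAddCommGroup H] [InnerProductSpace ℝ H] [CompleteSpace H]
    (f : H → ℝ) (x : H) (hlip : LocallyLipschitzNear f x) :
    clarkeSubdiff f x = ⋂ (ε : ℝ) (_ : 0 < ε), goldsteinSubdiff f ε x :=
  stmt4_general f x hlip
end

section
/- Let H be a real Hilbert space and let (w_l)_{l≥1} be an arbitrary sequence in H. For each l ≥ 1 set Ξ_l = {w_1,…,w_l} and let ψ_l be the unique element of minimal norm in −closure(convexHull(Ξ_l)). Then the sequence (ψ_l) converges strongly (in norm) in H. -/
open Filter Topology RealInnerProductSpace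

/-- The minimal-norm elements of `-closure (convexHull {w_1,…,w_l})` converge strongly. -/
theorem stmt14 {H : Type*} [NormedAddCommGroup H] [InnerProductSpace ℝ H] [CompleteSpace H]
    (w : ℕ → H) (ψ : ℕ → H)
    (hmem : ∀ l : ℕ, ψ l ∈ -closure (convexHull ℝ (w '' Set.Iic l)))
    (hmin : ∀ l : ℕ, ∀ v ∈ -closure (convexHull ℝ (w '' Set.Iic l)), ‖ψ l‖ ≤ ‖v‖) :
    ∃ ψlim : H, Tendsto ψ atTop (𝓝 ψlim) := by
  classical
  set C : ℕ → Set H := fun l => -closure (convexHull ℝ (w '' Set.Iic l)) with hCdef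
  have hconv : ∀ l, Convex ℝ (C l) := fun l =>
    ((convex_convexHull ℝ _).closure).neg
  have hCmono : ∀ {m l : ℕ}, m ≤ l → C m ⊆ C l := by
    intro m l h
    exact Set.neg_subset_neg.mpr (closure_mono (convexHull_mono
      (Set.image_mono (Set.Iic_subset_Iic.mpr h))))
  set a : ℕ → ℝ := fun l => ‖ψ l‖ with hadef
  have hanti : Antitone a := fun m l h => hmin l (ψ m) (hCmono h (hmem m))
  have hbdd : BddBelow (Set.range a) := ⟨0, by rintro x ⟨l, rfl⟩; exact norm_nonneg _⟩
  set d : ℝ := ⨅ l, a l with hddef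
  have hd0 : 0 ≤ d := le_ciInf fun l => norm_nonneg _
  have hda : ∀ l, d ≤ a l := fun l => ciInf_le hbdd l
  have htend : Tendsto a atTop (𝓝 d) := tendsto_atTop_ciInf hanti hbdd
  have key : ∀ m l, m ≤ l → ‖ψ m - ψ l‖ ^ 2 ≤ 2 * (a m) ^ 2 - 2 * (a l) ^ 2 := by
    intro m l h
    have hmid : (1/2 : ℝ) • ψ m + (1/2 : ℝ) • ψ l ∈ C l :=
      hconv l (hCmono h (hmem m)) (hmem l) (by norm_num) (by norm_num) (by norm_num)
    have h1 : ‖ψ l‖ ≤ ‖(1/2 : ℝ) • ψ m + (1/2 : ℝ) • ψ l‖ := hmin l _ hmid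
    have h2 : 2 * ‖ψ l‖ ≤ ‖ψ m + ψ l‖ := by
      have heq : (1/2 : ℝ) • ψ m + (1/2 : ℝ) • ψ l = (1/2 : ℝ) • (ψ m + ψ l) := by
        rw [smul_add]
      rw [heq, norm_smul] at h1
      simp only [norm_div, Real.norm_ofNat, norm_one] at h1
      linarith
    have hpar := parallelogram_law_with_norm ℝ (ψ m) (ψ l)
    have hl0 : (0 : ℝ) ≤ ‖ψ l‖ := norm_nonneg _
    simp only [hadef]
    nlinarith [norm_nonneg (ψ m + ψ l)]
  set b : ℕ → ℝ := fun N => Real.sqrt (2 * (a N) ^ 2 - 2 * d ^ 2) with hbdef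
  have hbound : ∀ n m N : ℕ, N ≤ n → N ≤ m → dist (ψ n) (ψ m) ≤ b N := by
    intro n m N hn hm
    have hsq : ‖ψ n - ψ m‖ ^ 2 ≤ 2 * (a N) ^ 2 - 2 * d ^ 2 := by
      rcases le_total n m with h | h
      · have := key n m h
        have h1 : a n ≤ a N := hanti hn
        have h2 : d ≤ a m := hda m
        have h3 : 0 ≤ a m := norm_nonneg _
        nlinarith [norm_nonneg (ψ n)]
      · have := key m n h
        rw [norm_sub_rev]
        have h1 : a m ≤ a N := hanti hm
        have h2 : d ≤ a n := hda n
        have h3 : 0 ≤ a n := norm_nonneg _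
        nlinarith [norm_nonneg (ψ m)]
    rw [dist_eq_norm]
    calc ‖ψ n - ψ m‖ = Real.sqrt (‖ψ n - ψ m‖ ^ 2) := by
          rw [Real.sqrt_sq (norm_nonneg _)]
      _ ≤ b N := Real.sqrt_le_sqrt hsq
  have hb0 : Tendsto b atTop (𝓝 0) := by
    have h1 : Tendsto (fun N => 2 * (a N) ^ 2 - 2 * d ^ 2) atTop (𝓝 (2 * d ^ 2 - 2 * d ^ 2)) :=
      (((htend.pow 2).const_mul 2).sub_const _)
    have h2 : Tendsto (fun N => 2 * (a N) ^ 2 - 2 * d ^ 2) atTop (𝓝 0) := by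
      simpa using h1
    have := h2.sqrt
    simpa using this
  have hcauchy : CauchySeq ψ := cauchySeq_of_le_tendsto_0 b hbound hb0
  exact cauchySeq_tendsto_of_complete hcauchy
end

section
/- Let H be a real Hilbert space, L > 0, δ > 0, c ∈ (0,1), and let η, ζ ∈ H satisfy ‖η‖ ≤ L, ‖ζ‖ ≤ L, ‖η‖ > δ and ⟨η, ζ⟩ > −c·‖η‖². Let K ⊆ H be a convex set with η ∈ K and −ζ ∈ K, and let ψ ∈ K satisfy ‖ψ‖ ≤ ‖w‖ for all w ∈ K. Then ‖ψ‖² < (1 − ((1 − c)·δ/(2L))²)·‖η‖². -/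
open Filter Topology RealInnerProductSpace

/-- Contraction estimate used in the finite-termination proof of the descent-direction
algorithm. -/
theorem stmt15 {H : Type*} [NormedAddCommGroup H] [InnerProductSpace ℝ H] [CompleteSpace H]
    (L δ c : ℝ) (hL : 0 < L) (hδ : 0 < δ) (hc : c ∈ Set.Ioo (0 : ℝ) 1)
    (η ζ : H) (hη : ‖η‖ ≤ L) (hζ : ‖ζ‖ ≤ L) (hηδ : δ < ‖η‖)
    (hangle : -c * ‖η‖ ^ 2 < ⟪η, ζ⟫)
    (K : Set H) (hK : Convex ℝ K) (hηK : η ∈ K) (hζK : -ζ ∈ K)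
    (ψ : H) (hψK : ψ ∈ K) (hψmin : ∀ w ∈ K, ‖ψ‖ ≤ ‖w‖) :
    ‖ψ‖ ^ 2 < (1 - ((1 - c) * δ / (2 * L)) ^ 2) * ‖η‖ ^ 2 := by
  obtain ⟨hc0, hc1⟩ := hc
  have hηpos : 0 < ‖η‖ := lt_trans hδ hηδ
  have hE : ‖η‖ ^ 2 ≤ L ^ 2 := pow_le_pow_left₀ (norm_nonneg η) hη 2
  have hζ2 : ‖ζ‖ ^ 2 ≤ L ^ 2 := pow_le_pow_left₀ (norm_nonneg ζ) hζ 2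
  obtain ⟨t, ht⟩ : ∃ t : ℝ, t = (1 - c) * ‖η‖ ^ 2 / (4 * L ^ 2) := ⟨_, rfl⟩
  have ht0 : 0 < t := by
    rw [ht]
    have h1c : (0:ℝ) < 1 - c := by linarith
    positivity
  have ht1 : t ≤ 1 := by
    rw [ht, div_le_one (by positivity)]
    nlinarith
  have ht' : t * (4 * L ^ 2) = (1 - c) * ‖η‖ ^ 2 := by
    rw [ht]; field_simp
  obtain ⟨w, hw⟩ : ∃ w : H, w = (1 - t) • η + t • (-ζ) := ⟨_, rfl⟩
  have hwK : w ∈ K := by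
    rw [hw]; exact hK hηK hζK (by linarith) (le_of_lt ht0) (by ring)
  have h1 : ‖ψ‖ ^ 2 ≤ ‖w‖ ^ 2 := by
    have := hψmin w hwK
    nlinarith [norm_nonneg ψ, norm_nonneg w]
  have h2 : ‖w‖ ^ 2 = (1 - t) ^ 2 * ‖η‖ ^ 2 - 2 * ((1 - t) * t) * ⟪η, ζ⟫ + t ^ 2 * ‖ζ‖ ^ 2 := by
    rw [hw, @norm_add_sq_real, real_inner_smul_left, real_inner_smul_right, inner_neg_right,
      norm_smul, norm_smul, norm_neg, Real.norm_eq_abs, Real.norm_eq_abs,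
      abs_of_nonneg (by linarith : (0:ℝ) ≤ 1 - t), abs_of_pos ht0]
    ring
  have hrhs : (1 - c) ^ 2 * ‖η‖ ^ 4 / (4 * L ^ 2) = t * ((1 - c) * ‖η‖ ^ 2) := by
    rw [ht]; field_simp
  have key : ‖w‖ ^ 2 < ‖η‖ ^ 2 - (1 - c) ^ 2 * ‖η‖ ^ 4 / (4 * L ^ 2) := by
    rw [h2, hrhs]
    nlinarith [mul_nonneg (mul_nonneg ht0.le (sub_nonneg.mpr ht1)) (by linarith : (0:ℝ) ≤ ⟪η, ζ⟫ + c * ‖η‖ ^ 2),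
      mul_nonneg (mul_nonneg ht0.le ht0.le) (by linarith : (0:ℝ) ≤ L ^ 2 - ‖ζ‖ ^ 2),
      mul_nonneg (mul_nonneg ht0.le ht0.le) (by linarith : (0:ℝ) ≤ L ^ 2 - ‖η‖ ^ 2),
      mul_pos (mul_pos ht0 ht0) (by positivity : (0:ℝ) < L ^ 2),
      mul_pos (mul_pos ht0 ht0) (mul_pos (mul_pos hc0 hηpos) hηpos),
      mul_pos (mul_pos ht0 ht0) (mul_pos hηpos hηpos)]
  have hδ2 : δ ^ 2 ≤ ‖η‖ ^ 2 := by nlinarith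
  have h3 : (1 - c) ^ 2 * δ ^ 2 ≤ (1 - c) ^ 2 * ‖η‖ ^ 2 :=
    mul_le_mul_of_nonneg_left hδ2 (sq_nonneg (1 - c))
  have hstep : ((1 - c) * δ / (2 * L)) ^ 2 * ‖η‖ ^ 2 ≤ (1 - c) ^ 2 * ‖η‖ ^ 4 / (4 * L ^ 2) := by
    rw [div_pow, div_mul_eq_mul_div, div_le_div_iff₀ (by positivity) (by positivity)]
    have h4 := mul_le_mul_of_nonneg_right h3 (by positivity : (0:ℝ) ≤ ‖η‖ ^ 2 * (4 * L ^ 2))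
    calc ((1 - c) * δ) ^ 2 * ‖η‖ ^ 2 * (4 * L ^ 2)
        = (1 - c) ^ 2 * δ ^ 2 * (‖η‖ ^ 2 * (4 * L ^ 2)) := by ring
      _ ≤ (1 - c) ^ 2 * ‖η‖ ^ 2 * (‖η‖ ^ 2 * (4 * L ^ 2)) := h4
      _ = (1 - c) ^ 2 * ‖η‖ ^ 4 * (2 * L) ^ 2 := by ring
  calc ‖ψ‖ ^ 2 ≤ ‖w‖ ^ 2 := h1
    _ < ‖η‖ ^ 2 - (1 - c) ^ 2 * ‖η‖ ^ 4 / (4 * L ^ 2) := key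
    _ ≤ ‖η‖ ^ 2 - ((1 - c) * δ / (2 * L)) ^ 2 * ‖η‖ ^ 2 := by linarith
    _ = (1 - ((1 - c) * δ / (2 * L)) ^ 2) * ‖η‖ ^ 2 := by ring
end

section
/- Let H be a real Hilbert space and let f_1,…,f_k : H → ℝ each be locally Lipschitz near every point of H, with at least one f_{i₀} bounded from below. Let c ∈ (0,1) and let (ε_j), (δ_j) be sequences of positive reals with ε_j → 0, δ_j → 0 and Σ_{j=1}^∞ ε_j·δ_j = ∞. Let (x_j) and (w_j) be sequences in H such that for every j ≥ 1: (a) −w_j ∈ F_{ε_j}(x_j); (b) f_i(x_{j+1}) ≤ f_i(x_j) for all i = 1,…,k; and (c) either ‖w_j‖ ≤ δ_j, or f_i(x_{j+1}) ≤ f_i(x_j) − c·ε_j·‖w_j‖ for all i = 1,…,k. Then there exists a subsequence (w_{j_l}) with ‖w_{j_l}‖ → 0 as l → ∞. -/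
open Filter Topology RealInnerProductSpace

/-- If some objective is bounded from below, the descent method produces a subsequence of
directions whose norms tend to zero. -/
theorem stmt17 {H : Type*} [NormedAddCommGroup H] [InnerProductSpace ℝ H] [CompleteSpace H]
    {k : ℕ} (f : Fin k → H → ℝ)
    (hlip : ∀ i, ∀ y : H, LocallyLipschitzNear (f i) y)
    (i₀ : Fin k) (M : ℝ) (hbd : ∀ y : H, M ≤ f i₀ y)
    (c : ℝ) (hc : c ∈ Set.Ioo (0 : ℝ) 1)
    (εs δs : ℕ → ℝ) (hεpos : ∀ j, 0 < εs j) (hδpos : ∀ j, 0 < δs j)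
    (hε0 : Tendsto εs atTop (𝓝 (0 : ℝ))) (hδ0 : Tendsto δs atTop (𝓝 (0 : ℝ)))
    (hsum : Tendsto (fun n => ∑ j ∈ Finset.range n, εs j * δs j) atTop atTop)
    (xs ws : ℕ → H)
    (ha : ∀ j, -ws j ∈ multiSubdiff f (εs j) (xs j))
    (hb : ∀ j, ∀ i : Fin k, f i (xs (j + 1)) ≤ f i (xs j))
    (hcnd : ∀ j, ‖ws j‖ ≤ δs j ∨
      ∀ i : Fin k, f i (xs (j + 1)) ≤ f i (xs j) - c * εs j * ‖ws j‖) :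
    ∃ φ : ℕ → ℕ, StrictMono φ ∧
      Tendsto (fun l => ‖ws (φ l)‖) atTop (𝓝 (0 : ℝ)) := by
  have key : ∀ ε > (0 : ℝ), ∃ᶠ j in atTop, ‖ws j‖ < ε := by
    intro ε hε
    by_contra hcon
    rw [Filter.not_frequently] at hcon
    simp only [not_lt] at hcon
    rw [eventually_atTop] at hcon
    obtain ⟨N₁, hN₁⟩ := hcon
    have hδsmall : ∀ᶠ j in atTop, δs j < ε := hδ0.eventually (gt_mem_nhds hε)
    rw [eventually_atTop] at hδsmall
    obtain ⟨N₂, hN₂⟩ := hδsmall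
    set N₀ := max N₁ N₂ with hN₀
    have hstep : ∀ j, N₀ ≤ j → f i₀ (xs (j+1)) ≤ f i₀ (xs j) - c * (εs j * δs j) := by
      intro j hj
      have hδε : δs j < ε := hN₂ j (le_trans (le_max_right _ _) hj)
      have hεw : ε ≤ ‖ws j‖ := hN₁ j (le_trans (le_max_left _ _) hj)
      rcases hcnd j with h | h
      · linarith
      · have h2 := h i₀
        have h1 : δs j ≤ ‖ws j‖ := le_of_lt (lt_of_lt_of_le hδε hεw)
        have h4 : c * (εs j * δs j) ≤ c * εs j * ‖ws j‖ := by
          rw [← mul_assoc]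
          exact mul_le_mul_of_nonneg_left h1 (mul_pos hc.1 (hεpos j)).le
        linarith
    have hind : ∀ m, f i₀ (xs (N₀ + m)) ≤
        f i₀ (xs N₀) - c * ∑ j ∈ Finset.range m, εs (N₀+j) * δs (N₀+j) := by
      intro m
      induction m with
      | zero => simp
      | succ m ih =>
        have h3 : f i₀ (xs (N₀ + (m+1))) ≤ f i₀ (xs (N₀+m)) - c * (εs (N₀+m) * δs (N₀+m)) := by
          rw [← Nat.add_assoc]
          exact hstep (N₀ + m) (Nat.le_add_right _ _)
        rw [Finset.sum_range_succ]
        linarith [mul_add c (∑ j ∈ Finset.range m, εs (N₀+j) * δs (N₀+j))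
          (εs (N₀+m) * δs (N₀+m))]
    set S : ℕ → ℝ := fun n => ∑ j ∈ Finset.range n, εs j * δs j with hS
    obtain ⟨n, hn1, hn2⟩ :=
      ((hsum.eventually_ge_atTop (S N₀ + (f i₀ (xs N₀) - M + 1) / c)).and
        (eventually_ge_atTop N₀)).exists
    obtain ⟨m, rfl⟩ := Nat.exists_eq_add_of_le hn2
    have hsplit : S (N₀ + m) = S N₀ + ∑ j ∈ Finset.range m, εs (N₀+j) * δs (N₀+j) := by
      simp [hS, Finset.sum_range_add]
    have hdiv : (f i₀ (xs N₀) - M + 1) / c ≤ ∑ j ∈ Finset.range m, εs (N₀+j) * δs (N₀+j) := by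
      have hn1' : S N₀ + (f i₀ (xs N₀) - M + 1) / c ≤ S (N₀ + m) := hn1
      rw [hsplit] at hn1'
      linarith
    have hc' : f i₀ (xs N₀) - M + 1 ≤ c * ∑ j ∈ Finset.range m, εs (N₀+j) * δs (N₀+j) := by
      rw [mul_comm]
      exact (div_le_iff₀ hc.1).mp hdiv
    have := hind m
    have := hbd (xs (N₀ + m))
    linarith
  have hfreq : ∀ n : ℕ, ∃ᶠ j in atTop, ‖ws j‖ < 1/((n:ℝ)+1) :=
    fun n => key _ (by positivity)
  obtain ⟨φ, hφ, hP⟩ := Filter.extraction_forall_of_frequently hfreq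
  refine ⟨φ, hφ, ?_⟩
  exact squeeze_zero (fun l => norm_nonneg _) (fun l => le_of_lt (hP l))
    tendsto_one_div_add_atTop_nhds_zero_nat
end
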